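/- Let g₂, g₃, c₀, c₁ ∈ ℝ, let n ≥ 0 be a natural number, let B ∈ ℝ[X] be a monic polynomial of degree n, and set C := c₁·X + c₀. If the odd-case Lamé symmetry identity (4X³ − g₂X − g₃)²·B''' + 3(4X³ − g₂X − g₃)(12X² − g₂)·B'' + (4(4X³ − g₂X − g₃)·C + 300X⁴ − 66g₂X² − 48g₃X + (3/4)g₂²)·B' + 2B·((12X² − g₂)·C + 60X³ − 9g₂X − 6g₃) + 2B·C'·(4X³ − g₂X − g₃) = 0 holds in ℝ[X], then c₁ = −15/4 − n(n+4). -/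

import Mathlib

/-!
Every term of the identity has the form `pₖ · B⁽ᵏ⁾` with `deg pₖ ≤ k + 3`, so the identity has
degree at most `n + 3`, and its coefficient of `X ^ (n + 3)` only involves the leading
coefficients of the `pₖ`. For a monic `B` this coefficient is the indicial polynomial at infinity,
`16 n(n-1)(n-2) + 144 n(n-1) + (16 c₁ + 300) n + 32 c₁ + 120 = (16 n + 32)(c₁ + 15/4 + n(n+4))`,
and `16 n + 32 ≠ 0`.
-/

open Polynomial

theorem coeff_mul_iterate_derivative_of_natDegree_le {R : Type*} [Semiring R] {p B : R[X]}
    {j k n : ℕ} (hp : p.natDegree ≤ j + k) (hB : B.natDegree ≤ n) :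
    (p * derivative^[k] B).coeff (j + n) = p.coeff (j + k) * (n.descFactorial k • B.coeff n) := by
  rcases le_or_gt k n with hkn | hnk
  · obtain ⟨m, rfl⟩ := Nat.exists_eq_add_of_le hkn
    have hD : (derivative^[k] B).natDegree ≤ m :=
      (natDegree_iterate_derivative B k).trans (by omega)
    rw [← add_assoc, coeff_mul_add_eq_of_natDegree_le hp hD, coeff_iterate_derivative, add_comm m]
  · rw [iterate_derivative_eq_zero (hB.trans_lt hnk), Nat.descFactorial_eq_zero_iff_lt.mpr hnk,
      zero_smul, mul_zero, mul_zero, coeff_zero]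

theorem Polynomial.Monic.indicial_eq_zero_of_third_order {R : Type*} [CommRing R]
    {p₃ p₂ p₁ p₀ B : R[X]} (hB : B.Monic) (h₃ : p₃.natDegree ≤ 6) (h₂ : p₂.natDegree ≤ 5)
    (h₁ : p₁.natDegree ≤ 4) (h₀ : p₀.natDegree ≤ 3)
    (h : p₃ * derivative (derivative (derivative B)) + p₂ * derivative (derivative B)
      + p₁ * derivative B + p₀ * B = 0) :
    p₃.coeff 6 * (B.natDegree * (B.natDegree - 1) * (B.natDegree - 2))
      + p₂.coeff 5 * (B.natDegree * (B.natDegree - 1)) + p₁.coeff 4 * B.natDegree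
      + p₀.coeff 3 = 0 := by
  have h' : p₃ * derivative^[3] B + p₂ * derivative^[2] B + p₁ * derivative^[1] B
      + p₀ * derivative^[0] B = 0 := h
  have hc := congrArg (coeff · (3 + B.natDegree)) h'
  simp only [coeff_add, coeff_zero] at hc
  rw [coeff_mul_iterate_derivative_of_natDegree_le (j := 3) h₃ le_rfl,
    coeff_mul_iterate_derivative_of_natDegree_le (j := 3) h₂ le_rfl,
    coeff_mul_iterate_derivative_of_natDegree_le (j := 3) h₁ le_rfl,
    coeff_mul_iterate_derivative_of_natDegree_le (j := 3) h₀ le_rfl, hB.coeff_natDegree,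
    Nat.descFactorial_one, Nat.descFactorial_zero, nsmul_one, nsmul_one, nsmul_one, nsmul_one,
    Nat.cast_one, mul_one] at hc
  simp only [← descPochhammer_eval_eq_descFactorial, descPochhammer_succ_eval, descPochhammer_zero,
    eval_one] at hc
  linear_combination hc

/-- In the odd Lamé case with `C = c₁X + c₀` and `B` monic of degree `n`, the symmetry
identity forces `c₁ = −15/4 − n(n+4)`. -/
theorem odd_lame_leading_coefficient
    (g₂ g₃ c₀ c₁ : ℝ) (n : ℕ)
    (B : Polynomial ℝ) (hB : B.Monic) (hdeg : B.natDegree = n)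
    (h : (4 * X ^ 3 - Polynomial.C g₂ * X - Polynomial.C g₃) ^ 2
          * derivative (derivative (derivative B))
        + 3 * (4 * X ^ 3 - Polynomial.C g₂ * X - Polynomial.C g₃)
            * (12 * X ^ 2 - Polynomial.C g₂) * derivative (derivative B)
        + (4 * (4 * X ^ 3 - Polynomial.C g₂ * X - Polynomial.C g₃)
              * (Polynomial.C c₁ * X + Polynomial.C c₀)
            + 300 * X ^ 4 - Polynomial.C (66 * g₂) * X ^ 2
            - Polynomial.C (48 * g₃) * X + Polynomial.C (3 / 4 * g₂ ^ 2))
            * derivative B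
        + 2 * B * ((12 * X ^ 2 - Polynomial.C g₂)
              * (Polynomial.C c₁ * X + Polynomial.C c₀)
            + 60 * X ^ 3 - Polynomial.C (9 * g₂) * X - Polynomial.C (6 * g₃))
        + 2 * B * derivative (Polynomial.C c₁ * X + Polynomial.C c₀)
            * (4 * X ^ 3 - Polynomial.C g₂ * X - Polynomial.C g₃) = 0) :
    c₁ = -15 / 4 - (n : ℝ) * (n + 4) := by
  rw [show derivative (C c₁ * X + C c₀) = C c₁ by simp] at h
  have hindicial := hB.indicial_eq_zero_of_third_order
    (p₃ := (4 * X ^ 3 - C g₂ * X - C g₃) ^ 2)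
    (p₂ := 3 * (4 * X ^ 3 - C g₂ * X - C g₃) * (12 * X ^ 2 - C g₂))
    (p₁ := 4 * (4 * X ^ 3 - C g₂ * X - C g₃) * (C c₁ * X + C c₀)
      + 300 * X ^ 4 - C (66 * g₂) * X ^ 2 - C (48 * g₃) * X + C (3 / 4 * g₂ ^ 2))
    (p₀ := 2 * ((12 * X ^ 2 - C g₂) * (C c₁ * X + C c₀) + 60 * X ^ 3 - C (9 * g₂) * X
      - C (6 * g₃)) + 2 * C c₁ * (4 * X ^ 3 - C g₂ * X - C g₃))
    (by compute_degree) (by compute_degree) (by compute_degree) (by compute_degree)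
    (by linear_combination h)
  rw [hdeg, show ((4 * X ^ 3 - C g₂ * X - C g₃) ^ 2 : ℝ[X]).coeff 6 = 16 by
      compute_degree <;> simp,
    show (3 * (4 * X ^ 3 - C g₂ * X - C g₃) * (12 * X ^ 2 - C g₂) : ℝ[X]).coeff 5 = 144 by
      compute_degree <;> simp,
    show (4 * (4 * X ^ 3 - C g₂ * X - C g₃) * (C c₁ * X + C c₀) + 300 * X ^ 4 - C (66 * g₂) * X ^ 2
      - C (48 * g₃) * X + C (3 / 4 * g₂ ^ 2) : ℝ[X]).coeff 4 = 16 * c₁ + 300 by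
      compute_degree <;> simp,
    show (2 * ((12 * X ^ 2 - C g₂) * (C c₁ * X + C c₀) + 60 * X ^ 3 - C (9 * g₂) * X - C (6 * g₃))
      + 2 * C c₁ * (4 * X ^ 3 - C g₂ * X - C g₃) : ℝ[X]).coeff 3 = 32 * c₁ + 120 by
      compute_degree <;> norm_num; ring] at hindicial
  have hfactor : (16 * (n : ℝ) + 32) * (c₁ + 15 / 4 + n * (n + 4)) = 0 := by
    linear_combination hindicial
  linear_combination (mul_eq_zero.mp hfactor).resolve_left (by positivity)
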